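/- arXiv:2103.11685 — 5 statements merged into one kernel-verified Lean document; each statement's English description precedes it below -/
import Mathlib

section
/- Let u be a differentiable function satisfying the Riccati equation u' = u² + ν·u + K(θ) where K(θ) ≥ K₋ > ν²/4 for all θ. Then u cannot exist globally: there is a finite time T such that u(θ) → +∞ as θ → T⁻. Moreover T ≤ (π/2 - arctan((u(0)+ν/2)/√(K₋ - ν²/4)))/√(K₋ - ν²/4) + π/√(K₋ - ν²/4). -/
/-- The Riccati equation `u' = u² + νu + K(θ)` with `K(θ) ≥ Km > ν²/4` admits no
solution on the whole interval `[0, T₀]` with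
`T₀ = (π/2 - arctan((u₀+ν/2)/√(Km-ν²/4)))/√(Km-ν²/4) + π/√(Km-ν²/4)`:
every solution must blow up before this time. -/
theorem stmt_3 (ν Km : ℝ) (hν : 0 ≤ ν) (hKm : ν^2/4 < Km)
    (K : ℝ → ℝ) (hKc : Continuous K) (hK : ∀ θ, 0 ≤ θ → Km ≤ K θ)
    (u : ℝ → ℝ)
    (hu : ∀ θ ∈ Set.Icc (0:ℝ)
      ((Real.pi/2 - Real.arctan ((u 0 + ν/2) / Real.sqrt (Km - ν^2/4))) /
          Real.sqrt (Km - ν^2/4) + Real.pi / Real.sqrt (Km - ν^2/4)),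
      HasDerivAt u ((u θ)^2 + ν * u θ + K θ) θ) :
    False := by
  set a : ℝ := Real.sqrt (Km - ν^2/4) with ha_def
  have ha : 0 < a := Real.sqrt_pos.mpr (by linarith)
  have ha2 : a^2 = Km - ν^2/4 := Real.sq_sqrt (by linarith)
  set T : ℝ := (Real.pi/2 - Real.arctan ((u 0 + ν/2) / a)) / a + Real.pi / a with hT_def
  have hpi := Real.pi_pos
  have hT : 0 < T := by
    have h1 : Real.arctan ((u 0 + ν/2) / a) < Real.pi/2 := Real.arctan_lt_pi_div_two _
    have h2 : 0 < (Real.pi/2 - Real.arctan ((u 0 + ν/2) / a)) / a :=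
      div_pos (by linarith) ha
    have h3 : 0 < Real.pi / a := div_pos hpi ha
    rw [hT_def]; linarith
  set f : ℝ → ℝ := fun θ => Real.arctan ((u θ + ν/2) / a) - a * θ with hf_def
  -- derivative of f
  have hderiv : ∀ θ ∈ Set.Icc (0:ℝ) T,
      HasDerivAt f
        (1 / (1 + ((u θ + ν/2)/a)^2) * (((u θ)^2 + ν * u θ + K θ)/a) - a) θ := by
    intro θ hθ
    have h1 : HasDerivAt (fun θ => (u θ + ν/2)/a) (((u θ)^2 + ν * u θ + K θ)/a) θ :=
      ((hu θ hθ).add_const (ν/2)).div_const a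
    have h2 := h1.arctan
    have h3 : HasDerivAt (fun θ : ℝ => a * θ) a θ := by
      simpa using (hasDerivAt_id θ).const_mul a
    exact h2.sub h3
  -- derivative nonneg
  have hd0 : ∀ θ ∈ Set.Icc (0:ℝ) T,
      0 ≤ 1 / (1 + ((u θ + ν/2)/a)^2) * (((u θ)^2 + ν * u θ + K θ)/a) - a := by
    intro θ hθ
    set w : ℝ := u θ + ν/2 with hw
    set D : ℝ := (u θ)^2 + ν * u θ + K θ with hD
    have hKθ : Km ≤ K θ := hK θ hθ.1
    have hDw : a^2 + w^2 ≤ D := by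
      rw [hD, hw, ha2]; nlinarith [hKθ]
    have h1 : (0:ℝ) < 1 + (w/a)^2 := by positivity
    have key : a * (1 + (w/a)^2) ≤ D / a := by
      have heq : a * (1 + (w/a)^2) = (a^2 + w^2)/a := by field_simp
      rw [heq, div_le_div_iff₀ ha ha]
      nlinarith [hDw, ha]
    have : a ≤ 1 / (1 + (w/a)^2) * (D/a) := by
      rw [one_div, inv_mul_eq_div, le_div_iff₀ h1]
      linarith [key]
    linarith
  -- monotone
  have hmono : MonotoneOn f (Set.Icc 0 T) := by
    apply monotoneOn_of_deriv_nonneg (convex_Icc 0 T)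
    · exact fun θ hθ => (hderiv θ hθ).continuousAt.continuousWithinAt
    · intro θ hθ
      rw [interior_Icc] at hθ
      exact ((hderiv θ (Set.Ioo_subset_Icc_self hθ)).differentiableAt).differentiableWithinAt
    · intro θ hθ
      rw [interior_Icc] at hθ
      have hθ' := Set.Ioo_subset_Icc_self hθ
      rw [(hderiv θ hθ').deriv]
      exact hd0 θ hθ'
  have h0T : f 0 ≤ f T :=
    hmono (Set.left_mem_Icc.mpr hT.le) (Set.right_mem_Icc.mpr hT.le) hT.le
  have haT : a * T = Real.pi/2 - Real.arctan ((u 0 + ν/2) / a) + Real.pi := by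
    rw [hT_def]; field_simp
  have h1 : Real.arctan ((u T + ν/2) / a) < Real.pi/2 := Real.arctan_lt_pi_div_two _
  simp only [hf_def, mul_zero, sub_zero] at h0T
  rw [haT] at h0T
  linarith
end

section
/- Let u satisfy the Riccati equation u' = u² + ν·u + K with constants ν > 0 and 0 < K < ν²/4. If the initial value u₀ satisfies u₀ < -ν/2 + √(ν²/4 - K) (i.e., u₀ is below the larger root of x² + νx + K = 0), then the solution u exists for all θ ≥ 0 and converges to the smaller root -ν/2 - √(ν²/4 - K) as θ → ∞. -/
/-!
Write `x² + νx + K = (x - r₁)(x - r₂)` with `r₁ < r₂`. The Riccati equation `u' = (u - r₁)(u - r₂)`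
linearises under `u = r₂ + 1/w`, which gives the explicit solution
`u θ = r₂ - (r₂ - r₁)(u₀ - r₂) / ((u₀ - r₂) - (u₀ - r₁) e^{-(r₂ - r₁)θ})`.
For `u₀ < r₂` the denominator stays negative for `θ ≥ 0`, so the solution is global, and as
`e^{-(r₂ - r₁)θ} → 0` it tends to `r₂ - (r₂ - r₁) = r₁`.
-/

open Filter Topology Real

noncomputable section

namespace Riccati

variable (r₁ r₂ u₀ : ℝ)

def denom (θ : ℝ) : ℝ := (u₀ - r₂) - (u₀ - r₁) * exp (-(r₂ - r₁) * θ)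

def solution (θ : ℝ) : ℝ := r₂ - (r₂ - r₁) * (u₀ - r₂) / denom r₁ r₂ u₀ θ

variable {r₁ r₂ u₀}

theorem solution_zero (h : r₁ ≠ r₂) : solution r₁ r₂ u₀ 0 = u₀ := by
  have hd : r₁ - r₂ ≠ 0 := sub_ne_zero.2 h
  have h0 : denom r₁ r₂ u₀ 0 = r₁ - r₂ := by simp only [denom, mul_zero, exp_zero]; ring
  rw [solution, h0]
  field_simp
  ring

theorem denom_neg (h₁₂ : r₁ < r₂) (hu₀ : u₀ < r₂) {θ : ℝ} (hθ : 0 ≤ θ) :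
    denom r₁ r₂ u₀ θ < 0 := by
  have he : 0 < exp (-(r₂ - r₁) * θ) := exp_pos _
  have he1 : exp (-(r₂ - r₁) * θ) ≤ 1 := exp_le_one_iff.2 (by nlinarith)
  have : denom r₁ r₂ u₀ θ =
      (u₀ - r₂) * (1 - exp (-(r₂ - r₁) * θ)) - (r₂ - r₁) * exp (-(r₂ - r₁) * θ) := by
    rw [denom]; ring
  rw [this]
  nlinarith

theorem hasDerivAt_denom (θ : ℝ) :
    HasDerivAt (denom r₁ r₂ u₀)
      ((u₀ - r₁) * (r₂ - r₁) * exp (-(r₂ - r₁) * θ)) θ := by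
  have he := ((hasDerivAt_id θ).const_mul (-(r₂ - r₁))).exp
  exact ((he.const_mul (u₀ - r₁)).const_sub (u₀ - r₂)).congr_deriv (by simp only [id]; ring)

theorem hasDerivAt_solution {θ : ℝ} (hD : denom r₁ r₂ u₀ θ ≠ 0) :
    HasDerivAt (solution r₁ r₂ u₀)
      ((solution r₁ r₂ u₀ θ - r₁) * (solution r₁ r₂ u₀ θ - r₂)) θ := by
  have h := ((hasDerivAt_const θ ((r₂ - r₁) * (u₀ - r₂))).div (hasDerivAt_denom θ) hD).const_sub r₂
  refine h.congr_deriv ?_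
  have hD' : denom r₁ r₂ u₀ θ = (u₀ - r₂) - (u₀ - r₁) * exp (-(r₂ - r₁) * θ) := rfl
  rw [solution]
  generalize denom r₁ r₂ u₀ θ = D at hD hD' ⊢
  generalize exp (-(r₂ - r₁) * θ) = e at hD'
  field_simp
  linear_combination (r₂ - r₁) ^ 2 * (u₀ - r₂) * hD'

theorem tendsto_denom (h₁₂ : r₁ < r₂) :
    Tendsto (denom r₁ r₂ u₀) atTop (𝓝 (u₀ - r₂)) := by
  have he : Tendsto (fun θ => exp (-(r₂ - r₁) * θ)) atTop (𝓝 0) :=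
    tendsto_exp_atBot.comp (tendsto_id.const_mul_atTop_of_neg (by linarith))
  have h := (he.const_mul (u₀ - r₁)).const_sub (u₀ - r₂)
  rwa [mul_zero, sub_zero] at h

theorem tendsto_solution (h₁₂ : r₁ < r₂) (hu₀ : u₀ ≠ r₂) :
    Tendsto (solution r₁ r₂ u₀) atTop (𝓝 r₁) := by
  have ha : u₀ - r₂ ≠ 0 := sub_ne_zero.2 hu₀
  have h :=
    ((tendsto_const_nhds (x := (r₂ - r₁) * (u₀ - r₂))).div (tendsto_denom h₁₂) ha).const_sub r₂
  rwa [mul_div_cancel_right₀ _ ha, sub_sub_cancel] at h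

end Riccati

end

theorem stmt_5_general (ν K u₀ : ℝ) (hK : K < ν^2/4)
    (hu₀ : u₀ < -ν/2 + Real.sqrt (ν^2/4 - K)) :
    ∃ u : ℝ → ℝ, u 0 = u₀ ∧
      (∀ θ, 0 ≤ θ → HasDerivAt u ((u θ)^2 + ν * u θ + K) θ) ∧
      Filter.Tendsto u Filter.atTop (nhds (-ν/2 - Real.sqrt (ν^2/4 - K))) := by
  set δ := Real.sqrt (ν^2/4 - K)
  have hδ : 0 < δ := Real.sqrt_pos.2 (by linarith)
  have hδ2 : δ^2 = ν^2/4 - K := Real.sq_sqrt (by linarith)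
  have h₁₂ : -ν/2 - δ < -ν/2 + δ := by linarith
  refine ⟨Riccati.solution (-ν/2 - δ) (-ν/2 + δ) u₀, Riccati.solution_zero h₁₂.ne,
    fun θ hθ => ?_, Riccati.tendsto_solution h₁₂ hu₀.ne⟩
  convert Riccati.hasDerivAt_solution (Riccati.denom_neg h₁₂ hu₀ hθ).ne using 1
  linear_combination hδ2

/-- For `0 < K < ν²/4` and initial value below the larger root of `x² + νx + K`,
the Riccati equation `u' = u² + νu + K` has a global solution converging to the
smaller root `-ν/2 - √(ν²/4 - K)`. -/
theorem stmt_5 (ν K u₀ : ℝ) (hν : 0 < ν) (hK0 : 0 < K) (hK : K < ν^2/4)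
    (hu₀ : u₀ < -ν/2 + Real.sqrt (ν^2/4 - K)) :
    ∃ u : ℝ → ℝ, u 0 = u₀ ∧
      (∀ θ, 0 ≤ θ → HasDerivAt u ((u θ)^2 + ν * u θ + K) θ) ∧
      Filter.Tendsto u Filter.atTop (nhds (-ν/2 - Real.sqrt (ν^2/4 - K))) :=
  stmt_5_general ν K u₀ hK hu₀
end

section
/- For 0 < ν < 2 and ω = √(1 - ν²/4), the function F(θ) = 1 - α + ((να + 2β)/(2ω)·sin(ωθ) + α·cos(ωθ))·e^{-νθ/2} satisfies F(θ) > 0 for all θ ≥ 0 whenever β² + 2α - 1 < 0 and α ≤ 1/2. (Sufficient condition for non-vanishing of the denominator along one oscillation.) -/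
/-!
`F(θ) - (1 - α)` is the solution `x` of the damped oscillator `x'' + ν x' + x = 0` with
`x 0 = α`, `x' 0 = β`. Its energy `x² + x'²` has derivative `-2ν x'² ≤ 0`, so
`x(θ)² ≤ α² + β² < (1 - α)²` for `θ ≥ 0`, the last step being `β² + 2α - 1 < 0`; this
condition also forces `α < 1/2`, hence `|x(θ)| < 1 - α`.
-/

open Real

/-- The solution of `x'' + ν x' + x = 0` with `x 0 = a`, `x' 0 = b`, when `ω² = 1 - ν²/4`
and `ω ≠ 0`. -/
noncomputable def dampedOscillation (ν ω a b t : ℝ) : ℝ :=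
  ((ν * a + 2 * b) / (2 * ω) * sin (ω * t) + a * cos (ω * t)) * exp (-(ν * t / 2))

section DampedOscillation

variable {ν ω : ℝ}

@[simp]
lemma dampedOscillation_zero (ν ω a b : ℝ) : dampedOscillation ν ω a b 0 = a := by
  simp [dampedOscillation]

lemma hasDerivAt_dampedOscillation (hω : ω ^ 2 = 1 - ν ^ 2 / 4) (hω0 : ω ≠ 0) (a b t : ℝ) :
    HasDerivAt (dampedOscillation ν ω a b) (dampedOscillation ν ω b (-a - ν * b) t) t := by
  have hlin : HasDerivAt (fun x => ω * x) ω t := by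
    simpa using (hasDerivAt_id t).const_mul ω
  have hdecay : HasDerivAt (fun x => -(ν * x / 2)) (-(ν / 2)) t := by
    simpa using (((hasDerivAt_id t).const_mul ν).div_const 2).fun_neg
  have := ((((hasDerivAt_sin _).comp t hlin).const_mul ((ν * a + 2 * b) / (2 * ω))).add
    (((hasDerivAt_cos _).comp t hlin).const_mul a)).mul ((hasDerivAt_exp _).comp t hdecay)
  refine this.congr_deriv ?_
  simp only [dampedOscillation, Function.comp_apply, Pi.add_apply]
  field_simp
  linear_combination (-4 * a * sin (ω * t)) * hω

lemma antitone_sq_add_sq_of_damped {x v : ℝ → ℝ} (hν : 0 ≤ ν)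
    (hx : ∀ t, HasDerivAt x (v t) t) (hv : ∀ t, HasDerivAt v (-x t - ν * v t) t) :
    Antitone fun t => x t ^ 2 + v t ^ 2 := by
  exact antitone_of_hasDerivAt_nonpos (f' := fun t => -(2 * ν) * v t ^ 2)
    (fun t => (((hx t).pow 2).add ((hv t).pow 2)).congr_deriv (by ring))
    fun t => mul_nonpos_of_nonpos_of_nonneg (by linarith) (sq_nonneg (v t))

lemma dampedOscillation_sq_le (hν : 0 ≤ ν) (hω : ω ^ 2 = 1 - ν ^ 2 / 4) (hω0 : ω ≠ 0)
    (a b : ℝ) {t : ℝ} (ht : 0 ≤ t) : dampedOscillation ν ω a b t ^ 2 ≤ a ^ 2 + b ^ 2 := by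
  have hv : ∀ s, HasDerivAt (dampedOscillation ν ω b (-a - ν * b))
      (-dampedOscillation ν ω a b s - ν * dampedOscillation ν ω b (-a - ν * b) s) s := by
    intro s
    refine (hasDerivAt_dampedOscillation hω hω0 _ _ s).congr_deriv ?_
    simp only [dampedOscillation]
    ring
  have hE := antitone_sq_add_sq_of_damped hν (hasDerivAt_dampedOscillation hω hω0 a b) hv ht
  simp only [dampedOscillation_zero] at hE
  nlinarith [sq_nonneg (dampedOscillation ν ω b (-a - ν * b) t)]

end DampedOscillation

theorem stmt_9_general (ν α β : ℝ) (hν0 : 0 < ν) (hν2 : ν < 2)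
    (ω : ℝ) (hω : ω = Real.sqrt (1 - ν^2/4))
    (hcond : β^2 + 2*α - 1 < 0) :
    ∀ θ, 0 ≤ θ →
      0 < 1 - α + ((ν*α + 2*β)/(2*ω) * Real.sin (ω*θ) + α * Real.cos (ω*θ)) *
        Real.exp (-(ν*θ/2)) := by
  intro θ hθ
  have hpos : 0 < 1 - ν ^ 2 / 4 := by nlinarith
  have hω2 : ω ^ 2 = 1 - ν ^ 2 / 4 := by rw [hω, sq_sqrt hpos.le]
  have hω0 : ω ≠ 0 := by rw [hω]; exact (sqrt_pos.mpr hpos).ne'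
  have hx := dampedOscillation_sq_le hν0.le hω2 hω0 α β hθ
  change 0 < 1 - α + dampedOscillation ν ω α β θ
  nlinarith [sq_nonneg β, sq_nonneg (1 - α + dampedOscillation ν ω α β θ)]

/-- For `0 < ν < 2`, `ω = √(1-ν²/4)`, the denominator function
`F(θ) = 1 - α + ((να+2β)/(2ω)·sin ωθ + α·cos ωθ)·e^{-νθ/2}` is positive on
`[0,∞)` whenever `β² + 2α - 1 < 0` and `α ≤ 1/2`. -/
theorem stmt_9 (ν α β : ℝ) (hν0 : 0 < ν) (hν2 : ν < 2)
    (ω : ℝ) (hω : ω = Real.sqrt (1 - ν^2/4))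
    (hcond : β^2 + 2*α - 1 < 0) (hα : α ≤ 1/2) :
    ∀ θ, 0 ≤ θ →
      0 < 1 - α + ((ν*α + 2*β)/(2*ω) * Real.sin (ω*θ) + α * Real.cos (ω*θ)) *
        Real.exp (-(ν*θ/2)) :=
  stmt_9_general ν α β hν0 hν2 ω hω hcond
end

section
/- For ν = 0 the statement: if β² + 2α - 1 < 0 then F₀(θ) := 1 - α + β·sin θ + α·cos θ > 0 for all θ ∈ ℝ. Conversely if β² + 2α - 1 > 0 then F₀ vanishes at some θ. -/
/-- For `ν = 0`: if `β² + 2α - 1 < 0` then `F₀(θ) = 1 - α + β sin θ + α cos θ`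
is everywhere positive; if `β² + 2α - 1 > 0` then `F₀` vanishes somewhere. -/
theorem stmt_10 (α β : ℝ) :
    (β^2 + 2*α - 1 < 0 → ∀ θ : ℝ, 0 < 1 - α + β * Real.sin θ + α * Real.cos θ) ∧
    (β^2 + 2*α - 1 > 0 → ∃ θ : ℝ, 1 - α + β * Real.sin θ + α * Real.cos θ = 0) := by
  constructor
  · intro h θ
    have hsc := Real.sin_sq_add_cos_sq θ
    have hα : (0:ℝ) < 1 - α := by nlinarith [sq_nonneg β]
    set x := β * Real.sin θ + α * Real.cos θ with hx
    have h1 : x^2 ≤ α^2 + β^2 := by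
      rw [hx]
      nlinarith [sq_nonneg (β * Real.cos θ - α * Real.sin θ), hsc]
    have h2 : x^2 < (1-α)^2 := by nlinarith
    by_contra hcon
    push_neg at hcon
    have hx' : 1 - α ≤ -x := by linarith
    have := mul_self_le_mul_self (le_of_lt hα) hx'
    nlinarith
  · intro h
    set R := Real.sqrt (α^2 + β^2) with hRdef
    have hR2 : R^2 = α^2 + β^2 := Real.sq_sqrt (by positivity)
    have hRgt : (1-α)^2 < R^2 := by nlinarith
    have hRnn : 0 ≤ R := Real.sqrt_nonneg _
    have hRpos : 0 < R := by nlinarith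
    have habs : |α| ≤ R := by
      have : α^2 ≤ R^2 := by nlinarith [sq_nonneg β]
      calc |α| = Real.sqrt (α^2) := (Real.sqrt_sq_eq_abs α).symm
        _ ≤ Real.sqrt (R^2) := Real.sqrt_le_sqrt (by nlinarith [sq_nonneg β])
        _ = R := Real.sqrt_sq hRnn
    have hm1 : -1 ≤ α / R := by
      rw [le_div_iff₀ hRpos]; nlinarith [abs_le.mp habs]
    have h1 : α / R ≤ 1 := by
      rw [div_le_one hRpos]; nlinarith [abs_le.mp habs]
    obtain ⟨θ₀, hc, hs⟩ : ∃ θ, Real.cos θ = α / R ∧ Real.sin θ = β / R := by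
      have hsin : Real.sin (Real.arccos (α / R)) = |β| / R := by
        rw [Real.sin_arccos]
        have : 1 - (α / R)^2 = (|β| / R)^2 := by
          rw [div_pow, div_pow, sq_abs]
          field_simp
          nlinarith
        rw [this, Real.sqrt_sq (by positivity)]
      rcases le_or_gt 0 β with hb | hb
      · exact ⟨Real.arccos (α / R), Real.cos_arccos hm1 h1, by
          rw [hsin, abs_of_nonneg hb]⟩
      · refine ⟨-Real.arccos (α / R), by rw [Real.cos_neg]; exact Real.cos_arccos hm1 h1, ?_⟩
        rw [Real.sin_neg, hsin, abs_of_neg hb]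
        ring
    set f : ℝ → ℝ := fun θ => 1 - α + β * Real.sin θ + α * Real.cos θ with hf
    have hfcont : Continuous f := by fun_prop
    have hfa : f θ₀ = 1 - α + R := by
      simp only [hf, hs, hc]
      field_simp
      nlinarith
    have hfb : f (θ₀ + Real.pi) = 1 - α - R := by
      simp only [hf, Real.sin_add_pi, Real.cos_add_pi, hs, hc]
      field_simp
      nlinarith
    have hle : θ₀ ≤ θ₀ + Real.pi := by linarith [Real.pi_pos]
    have := intermediate_value_Icc' hle hfcont.continuousOn
    have h0 : (0:ℝ) ∈ Set.Icc (f (θ₀ + Real.pi)) (f θ₀) := by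
      rw [hfa, hfb]
      have h2 : |1 - α| < R := by
        rw [← Real.sqrt_sq_eq_abs, hRdef]
        exact Real.sqrt_lt_sqrt (sq_nonneg _) (by nlinarith)
      have := abs_lt.mp h2
      constructor <;> linarith
    obtain ⟨θ, hθmem, hθ⟩ := this h0
    exact ⟨θ, hθ⟩
end

section
/- For ν > 2, ω̃ = √(ν²/4 - 1), and any fixed α, β ∈ ℝ with α < 1, there exists ν₀ ≥ 2 such that for all ν > ν₀ the function F₊(θ) = 1 - α + ((να + 2β)/(2ω̃)·sinh(ω̃θ) + α·cosh(ω̃θ))·e^{-νθ/2} is strictly positive for all θ ≥ 0. -/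
/-- For fixed `α < 1`, `β`, sufficiently large collision frequency `ν` makes the
denominator `F₊(θ) = 1 - α + ((να+2β)/(2ω̃) sinh ω̃θ + α cosh ω̃θ)e^{-νθ/2}`,
`ω̃ = √(ν²/4 - 1)`, strictly positive on `[0,∞)`. -/
theorem stmt_11 (α β : ℝ) (hα : α < 1) :
    ∃ ν₀ : ℝ, 2 ≤ ν₀ ∧ ∀ ν : ℝ, ν₀ < ν → ∀ θ : ℝ, 0 ≤ θ →
      0 < 1 - α + ((ν*α + 2*β)/(2 * Real.sqrt (ν^2/4 - 1)) *
          Real.sinh (Real.sqrt (ν^2/4 - 1) * θ) +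
          α * Real.cosh (Real.sqrt (ν^2/4 - 1) * θ)) * Real.exp (-(ν*θ/2)) := by
  set m : ℝ := min 1 (1 - α) with hm
  have hm0 : 0 < m := lt_min one_pos (by linarith)
  have hm1 : m ≤ 1 := min_le_left _ _
  have hm2 : m ≤ 1 - α := min_le_right _ _
  refine ⟨2 + (2*|α| + 2*|β|)/m, le_add_of_nonneg_right (by positivity), ?_⟩
  intro ν hν θ hθ
  have hν2 : 2 < ν := by
    have : (0:ℝ) ≤ (2*|α| + 2*|β|)/m := by positivity
    linarith
  set ω := Real.sqrt (ν^2/4 - 1) with hωdef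
  have hω2 : ω^2 = ν^2/4 - 1 := Real.sq_sqrt (by nlinarith)
  have hωpos : 0 < ω := Real.sqrt_pos.mpr (by nlinarith)
  have hωlt : ω < ν/2 := by nlinarith
  have h2ω : ν - 2 ≤ 2*ω := by nlinarith
  have h2ω' : 2*ω ≤ ν := by nlinarith
  -- bound on A - α
  set A : ℝ := (ν*α + 2*β)/(2*ω) with hAdef
  have hA : |A - α| < m := by
    have hne : (2*ω) ≠ 0 := by positivity
    have e : A - α = ((ν - 2*ω)*α + 2*β)/(2*ω) := by
      rw [hAdef]; field_simp; ring
    rw [e, abs_div, abs_of_pos (by positivity : (0:ℝ) < 2*ω)]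
    rw [div_lt_iff₀ (by positivity)]
    have hnum : |(ν - 2*ω)*α + 2*β| ≤ 2*|α| + 2*|β| := by
      calc |(ν - 2*ω)*α + 2*β| ≤ |(ν - 2*ω)*α| + |2*β| := abs_add_le _ _
        _ = (ν - 2*ω)*|α| + 2*|β| := by
            rw [abs_mul, abs_mul, abs_of_nonneg (by linarith : (0:ℝ) ≤ ν - 2*ω)]
            norm_num
        _ ≤ 2*|α| + 2*|β| := by nlinarith [abs_nonneg α]
    have hbig : (2*|α| + 2*|β|) < m * (2*ω) := by
      have : (2*|α| + 2*|β|)/m < ν - 2 := by linarith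
      rw [div_lt_iff₀ hm0] at this
      nlinarith
    linarith
  -- rewrite the expression in terms of two exponentials
  set E₁ := Real.exp ((ω - ν/2)*θ) with hE1
  set E₂ := Real.exp (-(ω + ν/2)*θ) with hE2
  have key : (A * Real.sinh (ω*θ) + α * Real.cosh (ω*θ)) * Real.exp (-(ν*θ/2))
      = (A + α)/2 * E₁ + (α - A)/2 * E₂ := by
    rw [Real.sinh_eq, Real.cosh_eq, hE1, hE2]
    rw [show (ω - ν/2)*θ = ω*θ + (-(ν*θ/2)) by ring,
        show (-(ω + ν/2))*θ = (-(ω*θ)) + (-(ν*θ/2)) by ring,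
        Real.exp_add, Real.exp_add]
    ring
  rw [key]
  have hE1pos : 0 < E₁ := Real.exp_pos _
  have hE2pos : 0 < E₂ := Real.exp_pos _
  have hE1le : E₁ ≤ 1 := Real.exp_le_one_iff.mpr (by nlinarith)
  have hE2le : E₂ ≤ 1 := Real.exp_le_one_iff.mpr (by nlinarith)
  obtain ⟨hd1, hd2⟩ := abs_lt.mp hA
  have hlow2 : -(m/2) < (α - A)/2 * E₂ := by
    rcases le_or_gt 0 ((α - A)/2) with hc2 | hc2
    · have : 0 ≤ (α - A)/2 * E₂ := mul_nonneg hc2 hE2pos.le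
      linarith
    · have : (α - A)/2 * 1 ≤ (α - A)/2 * E₂ :=
        mul_le_mul_of_nonpos_left hE2le hc2.le
      simp only [mul_one] at this
      linarith
  rcases le_or_gt 0 ((A + α)/2) with hc | hc
  · have h1 : 0 ≤ (A + α)/2 * E₁ := mul_nonneg hc hE1pos.le
    linarith
  · have h1 : (A + α)/2 * 1 ≤ (A + α)/2 * E₁ :=
      mul_le_mul_of_nonpos_left hE1le hc.le
    simp only [mul_one] at h1
    linarith
end
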